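/- arXiv:2210.09123 — 7 statements merged into one kernel-verified Lean document; each statement's English description precedes it below -/
import Mathlib

section
/- For every real number α that is not an integer, the series ∑_{n=-∞}^{∞} (-1)^n/(α+n) converges to π/sin(απ). -/
/-!
Write `(-1)^m = 2·[m even] - 1`. The even terms `2/(α + 2n) = 1/(α/2 + n)` and all terms
`1/(α + m)` are symmetric partial sums of the Mittag-Leffler expansion of the cotangent,
so the alternating sum tends to `π cot(πα/2) - π cot(πα)`, which is `π / sin(πα)` by the
half-angle identity `cot(z/2) - cot z = 1 / sin z`.
-/

open Real Filter Finset Topology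

lemma sum_Icc_one_div_add_eq_add_sum_cotTerm (x : ℂ) (N : ℕ) :
    ∑ n ∈ Icc (-(N : ℤ)) N, 1 / (x + n) = 1 / x + ∑ j ∈ range N, cotTerm x j := by
  induction N with
  | zero => simp
  | succ N ih =>
    push_cast
    rw [sum_Icc_succ_eq_add_endpoints, ih, sum_range_succ]
    push_cast
    ring

theorem Complex.tendsto_sum_Icc_one_div_add {x : ℂ} (hx : x ∈ Complex.integerComplement) :
    Tendsto (fun N : ℕ ↦ ∑ n ∈ Icc (-(N : ℤ)) N, 1 / (x + n)) atTop
      (𝓝 (π * Complex.cot (π * x))) := by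
  simp_rw [sum_Icc_one_div_add_eq_add_sum_cotTerm]
  simpa using (tendsto_logDeriv_euler_cot_sub hx).const_add (1 / x)

theorem Real.tendsto_sum_Icc_one_div_add {x : ℝ} (hx : ∀ m : ℤ, x ≠ m) :
    Tendsto (fun N : ℕ ↦ ∑ n ∈ Icc (-(N : ℤ)) N, 1 / (x + n)) atTop
      (𝓝 (π * cot (π * x))) := by
  have hxℂ : (x : ℂ) ∈ Complex.integerComplement := by
    rintro ⟨m, hm⟩
    exact hx m (by exact_mod_cast hm.symm)
  rw [← tendsto_ofReal_iff]
  push_cast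
  exact Complex.tendsto_sum_Icc_one_div_add hxℂ

lemma Real.cot_half_sub_cot {z : ℝ} (hz : sin z ≠ 0) : cot (z / 2) - cot z = 1 / sin z := by
  obtain ⟨w, rfl⟩ : ∃ w, z = 2 * w := ⟨z / 2, by ring⟩
  rw [sin_two_mul] at hz ⊢
  have hs : sin w ≠ 0 := right_ne_zero_of_mul (left_ne_zero_of_mul hz)
  have hc : cos w ≠ 0 := right_ne_zero_of_mul hz
  rw [mul_div_cancel_left₀ w two_ne_zero, cot_eq_cos_div_sin, cot_eq_cos_div_sin, sin_two_mul,
    cos_two_mul]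
  field_simp
  ring

lemma sum_Icc_filter_even {M : Type*} [AddCommMonoid M] (f : ℤ → M) (N : ℕ) :
    ∑ m ∈ Icc (-(N : ℤ)) N with Even m, f m =
      ∑ n ∈ Icc (-((N / 2 : ℕ) : ℤ)) (N / 2 : ℕ), f (2 * n) := by
  rw [← sum_image (g := (2 * ·)) fun a _ b _ h ↦ by simpa using h]
  congr 1
  ext m
  simp only [mem_filter, mem_Icc, mem_image, Int.even_iff]
  constructor
  · intro hm
    exact ⟨m / 2, by omega, by omega⟩
  · rintro ⟨n, hn, rfl⟩
    omega

lemma sum_Icc_neg_one_zpow_div {K : Type*} [Field K] [CharZero K] (α : K) (N : ℕ) :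
    ∑ m ∈ Icc (-(N : ℤ)) N, (-1) ^ m / (α + m) =
      ∑ n ∈ Icc (-((N / 2 : ℕ) : ℤ)) (N / 2 : ℕ), 1 / (α / 2 + n) -
        ∑ m ∈ Icc (-(N : ℤ)) N, 1 / (α + m) := by
  have hsign (m : ℤ) :
      (-1 : K) ^ m / (α + m) = (if Even m then 2 / (α + m) else 0) - 1 / (α + m) := by
    rcases Int.even_or_odd m with h | h
    · rw [h.neg_one_zpow, if_pos h]; ring
    · rw [h.neg_one_zpow, if_neg (Int.not_even_iff_odd.mpr h)]; ring
  rw [sum_congr rfl fun m _ ↦ hsign m, sum_sub_distrib, ← sum_filter, sum_Icc_filter_even]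
  congr 1
  refine sum_congr rfl fun n _ ↦ ?_
  push_cast
  rw [div_add' _ _ _ two_ne_zero, one_div_div]
  ring

theorem sum_alternating_csc (α : ℝ) (hα : ∀ m : ℤ, α ≠ m) :
    Tendsto (fun N : ℕ => ∑ n ∈ Finset.Icc (-(N : ℤ)) (N : ℤ), (-1 : ℝ) ^ n / (α + n))
      atTop (nhds (π / Real.sin (α * π))) := by
  have hα_half : ∀ m : ℤ, α / 2 ≠ m := fun m h ↦ hα (2 * m) (by push_cast; linarith)
  have hsin : sin (π * α) ≠ 0 := by
    rw [Ne, sin_eq_zero_iff]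
    rintro ⟨m, hm⟩
    exact hα m (by nlinarith [pi_pos])
  have hlim := ((Real.tendsto_sum_Icc_one_div_add hα_half).comp
    (Nat.tendsto_div_const_atTop two_ne_zero)).sub (Real.tendsto_sum_Icc_one_div_add hα)
  have hval : π * cot (π * (α / 2)) - π * cot (π * α) = π / sin (α * π) := by
    rw [← mul_sub, ← mul_div_assoc, cot_half_sub_cot hsin, mul_comm α, mul_one_div]
  rw [← hval]
  exact hlim.congr fun N ↦ (sum_Icc_neg_one_zpow_div α N).symm
end

section
/- For every real number α that is not an integer, the series ∑_{n=-∞}^{∞} 1/(α+n) (summed symmetrically) converges to π·cot(απ). -/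
/-!
Taking logarithmic derivatives in Euler's product `sin (π z) = π z ∏ₙ (1 - z² / n²)`, which
converges locally uniformly, gives `π cot (π z) = 1 / z + ∑ₙ (1 / (z - n) + 1 / (z + n))` on
`ℂ ∖ ℤ` as a limit of partial sums. Pairing the terms `±n`, the symmetric partial sum over
`[-N, N]` is exactly the `N`-th of these partial sums.
-/

open Real Filter

theorem Finset.sum_Icc_neg_eq_add_sum_range {M : Type*} [AddCommGroup M] (f : ℤ → M) (N : ℕ) :
    ∑ n ∈ Finset.Icc (-(N : ℤ)) N, f n =
      f 0 + ∑ j ∈ Finset.range N, (f (-(j + 1)) + f (j + 1)) := by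
  induction N with
  | zero => simp
  | succ N ih =>
    rw [Nat.cast_succ, Finset.sum_Icc_succ_eq_add_endpoints, ih, Finset.sum_range_succ]
    abel

theorem Complex.ofReal_mem_integerComplement {α : ℝ} (hα : ∀ m : ℤ, α ≠ m) :
    (α : ℂ) ∈ Complex.integerComplement := by
  rintro ⟨m, hm⟩
  exact hα m (by exact_mod_cast hm.symm)

theorem sum_cot (α : ℝ) (hα : ∀ m : ℤ, α ≠ m) :
    Tendsto (fun N : ℕ => ∑ n ∈ Finset.Icc (-(N : ℤ)) (N : ℤ), 1 / (α + n))
      atTop (nhds (π * Real.cot (α * π))) := by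
  have hx := Complex.ofReal_mem_integerComplement hα
  have hcot := (tendsto_logDeriv_euler_cot_sub hx).const_add (1 / (α : ℂ))
  rw [add_sub_cancel] at hcot
  rw [← tendsto_ofReal_iff]
  convert hcot using 2 with N
  · rw [Finset.sum_Icc_neg_eq_add_sum_range]
    push_cast
    simp only [cotTerm, sub_eq_add_neg, neg_add, add_zero]
  · push_cast
    rw [mul_comm (α : ℂ)]
end

section
/- For every real x that is not an integer, π = sin(πx) · ∑_{n=-∞}^{∞} (-1)^n/(x+n), where the doubly infinite sum is taken as the limit of symmetric partial sums. -/
/-!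
Keeping only the even terms of `∑ (-1)ⁿ / (x + n)` and doubling them, the alternating sum is
`∑_{|k| ≤ N/2} 1 / (x/2 + k) - ∑_{|n| ≤ N} 1 / (x + n)`. By the partial fraction expansion of the
cotangent this tends to `π cot (π x / 2) - π cot (π x) = π / sin (π x)`.
-/

open Real Filter

namespace Complex

open Finset Topology

local notation "ℂ_ℤ" => integerComplement

lemma sum_Icc_one_div_add_eq (x : ℂ) (N : ℕ) :
    ∑ n ∈ Icc (-N : ℤ) N, 1 / (x + n) = 1 / x + ∑ j ∈ range N, cotTerm x j := by
  induction N with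
  | zero => simp
  | succ N ih =>
    rw [Nat.cast_succ, sum_Icc_succ_eq_add_endpoints, ih, sum_range_succ]
    push_cast
    ring

lemma tendsto_sum_Icc_one_div_add_s3 {x : ℂ} (hx : x ∈ ℂ_ℤ) :
    Tendsto (fun N : ℕ ↦ ∑ n ∈ Icc (-N : ℤ) N, 1 / (x + n)) atTop (𝓝 (π * cot (π * x))) := by
  have := (tendsto_logDeriv_euler_cot_sub hx).const_add (1 / x)
  rw [add_sub_cancel] at this
  exact this.congr fun N ↦ (sum_Icc_one_div_add_eq x N).symm

lemma sum_Icc_neg_one_zpow_div_add_eq (x : ℂ) (N : ℕ) :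
    ∑ n ∈ Icc (-N : ℤ) N, (-1) ^ n / (x + n) =
      ∑ k ∈ Icc (-(N / 2 : ℕ) : ℤ) (N / 2 : ℕ), 1 / (x / 2 + k) -
        ∑ n ∈ Icc (-N : ℤ) N, 1 / (x + n) := by
  have hsign (n : ℤ) : (-1 : ℂ) ^ n = (if Even n then 2 else 0) - 1 := by
    rcases n.even_or_odd with h | h
    · rw [h.neg_one_zpow, if_pos h]; norm_num
    · rw [h.neg_one_zpow, if_neg (Int.not_even_iff_odd.mpr h)]; norm_num
  have hevens : (Icc (-N : ℤ) N).filter Even =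
      (Icc (-(N / 2 : ℕ) : ℤ) (N / 2 : ℕ)).image (2 * ·) := by
    ext n
    simp only [mem_filter, mem_Icc, mem_image, Int.even_iff]
    constructor
    · rintro ⟨⟨hlo, hhi⟩, heven⟩
      exact ⟨n / 2, ⟨by omega, by omega⟩, by omega⟩
    · rintro ⟨k, ⟨hlo, hhi⟩, rfl⟩
      omega
  simp_rw [hsign, sub_div, sum_sub_distrib, ite_div, zero_div]
  rw [← sum_filter, hevens, sum_image (fun a _ b _ h ↦ by simpa using h)]
  congr 1
  refine sum_congr rfl fun k _ ↦ ?_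
  push_cast
  field_simp

lemma cot_half_sub_cot {θ : ℂ} (h : sin θ ≠ 0) : cot (θ / 2) - cot θ = 1 / sin θ := by
  obtain ⟨φ, rfl⟩ : ∃ φ, θ = 2 * φ := ⟨θ / 2, by ring⟩
  rw [sin_two_mul] at h
  have hs : sin φ ≠ 0 := right_ne_zero_of_mul (left_ne_zero_of_mul h)
  have hc : cos φ ≠ 0 := right_ne_zero_of_mul h
  rw [mul_div_cancel_left₀ _ two_ne_zero, cot_eq_cos_div_sin, cot_eq_cos_div_sin, sin_two_mul,
    cos_two_mul]
  field_simp
  ring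

lemma half_mem_integerComplement {x : ℂ} (hx : x ∈ ℂ_ℤ) : x / 2 ∈ ℂ_ℤ := by
  rintro ⟨m, hm⟩
  exact hx ⟨2 * m, by push_cast; rw [hm]; ring⟩

lemma tendsto_sum_Icc_neg_one_zpow_div_add {x : ℂ} (hx : x ∈ ℂ_ℤ) :
    Tendsto (fun N : ℕ ↦ ∑ n ∈ Icc (-N : ℤ) N, (-1) ^ n / (x + n)) atTop
      (𝓝 (π / sin (π * x))) := by
  have hevens := (tendsto_sum_Icc_one_div_add_s3 (half_mem_integerComplement hx)).comp
    (Nat.tendsto_div_const_atTop two_ne_zero)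
  have hlim := hevens.sub (tendsto_sum_Icc_one_div_add_s3 hx)
  have hval : π * cot (π * (x / 2)) - π * cot (π * x) = π / sin (π * x) := by
    rw [← mul_sub, ← mul_div_assoc, cot_half_sub_cot (sin_pi_mul_ne_zero hx), mul_one_div]
  rw [hval] at hlim
  exact hlim.congr fun N ↦ (sum_Icc_neg_one_zpow_div_add_eq x N).symm

end Complex

theorem pi_eq_sin_mul_sum (x : ℝ) (hx : ∀ m : ℤ, x ≠ m) :
    Tendsto (fun N : ℕ =>
        Real.sin (π * x) * ∑ n ∈ Finset.Icc (-(N : ℤ)) (N : ℤ), (-1 : ℝ) ^ n / (x + n))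
      atTop (nhds π) := by
  have hx' : (x : ℂ) ∈ Complex.integerComplement :=
    fun ⟨m, hm⟩ ↦ hx m (by exact_mod_cast hm.symm)
  rw [← tendsto_ofReal_iff]
  push_cast
  have hlim := (Complex.tendsto_sum_Icc_neg_one_zpow_div_add hx').const_mul (Complex.sin (π * x))
  rwa [mul_div_cancel₀ _ (sin_pi_mul_ne_zero hx')] at hlim
end

section
/- For every real x that is not an integer, π³ = (2 sin³(πx)/(2 − sin²(πx))) · ∑_{n=-∞}^{∞} (-1)^n/(x+n)³, where the doubly infinite sum is taken as the limit of symmetric partial sums. -/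
/-!
Let `θ = π x`, `S = sin θ`, `C = cos θ`, and let `K` be the `2`-periodic extension of
`K(s) = (S² s² - 2 i S C s + S² - 2) e^{-iθs}` on `[-1, 1]`. The quadratic factor is chosen so
that `K` and `K'` are continuous on the circle; integrating by parts three times, the only
surviving boundary term comes from the jump of `K''`, and the Fourier coefficients are
`-2 (-1)ⁿ S³ / (π (x + n))³`. They are absolutely summable, so the Fourier series of `K` converges
to `K` everywhere, and evaluating it at `0`, where `K(0) = S² - 2`, gives the identity.
-/

open Real Filter
open Complex (I)

theorem Complex.exp_add_int_mul_pi_mul_I (z : ℂ) (n : ℤ) :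
    Complex.exp (z + n * π * I) = (-1) ^ n * Complex.exp z := by
  rw [Complex.exp_add, mul_assoc, Complex.exp_int_mul, Complex.exp_pi_mul_I, mul_comm]

theorem Complex.exp_neg_ofReal_mul_I (θ : ℝ) :
    Complex.exp (-(θ * I)) = Real.cos θ - Real.sin θ * I := by
  rw [← neg_mul, ← Complex.ofReal_neg, Complex.exp_ofReal_mul_I, Real.cos_neg, Real.sin_neg]
  push_cast
  ring

theorem hasDerivAt_quadratic_mul_cexp {w : ℂ} (hw : w ≠ 0) (a b c : ℂ) (s : ℝ) :
    HasDerivAt (fun t : ℝ => Complex.exp (w * t) *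
        ((a * t ^ 2 + b * t + c) / w - (2 * a * t + b) / w ^ 2 + 2 * a / w ^ 3))
      ((a * s ^ 2 + b * s + c) * Complex.exp (w * s)) s := by
  have hexp : HasDerivAt (fun z : ℂ => Complex.exp (w * z)) (Complex.exp (w * s) * w) s :=
    ((hasDerivAt_id (s : ℂ)).const_mul w).cexp.congr_deriv (by simp)
  have hquad := (((hasDerivAt_pow 2 (s : ℂ)).const_mul a).add
    ((hasDerivAt_id (s : ℂ)).const_mul b)).add_const c
  have hlin := ((hasDerivAt_id (s : ℂ)).const_mul (2 * a)).add_const b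
  have hprimitive :=
    ((hquad.div_const w).sub (hlin.div_const (w ^ 2))).add_const (2 * a / w ^ 3)
  refine (hexp.mul hprimitive).comp_ofReal.congr_deriv ?_
  simp only [Pi.add_apply, Pi.sub_apply, id]
  field_simp
  ring

theorem Real.sin_pi_mul_ne_zero {x : ℝ} (hx : ∀ m : ℤ, x ≠ m) : Real.sin (π * x) ≠ 0 :=
  Real.sin_ne_zero_iff.mpr fun m hm => hx m (mul_left_cancel₀ pi_ne_zero (by linarith))

namespace AlternatingInvCube

instance : Fact ((0 : ℝ) < 2) := ⟨two_pos⟩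

noncomputable def kernel (θ s : ℝ) : ℂ :=
  ((Real.sin θ : ℂ) ^ 2 * s ^ 2 - 2 * Real.sin θ * Real.cos θ * I * s + ((Real.sin θ : ℂ) ^ 2 - 2)) *
    Complex.exp (-(θ * I) * s)

variable (θ : ℝ)

theorem kernel_zero : kernel θ 0 = Real.sin θ ^ 2 - 2 := by
  simp [kernel]

theorem kernel_neg_one : kernel θ (-1) = kernel θ 1 := by
  simp only [kernel, Complex.ofReal_neg, Complex.ofReal_one, mul_neg_one, neg_neg, mul_one,
    Complex.exp_neg_ofReal_mul_I, Complex.exp_ofReal_mul_I]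
  linear_combination (4 * I * Real.sin θ) * (by exact_mod_cast Real.sin_sq_add_cos_sq θ :
    (Real.sin θ : ℂ) ^ 2 + (Real.cos θ : ℂ) ^ 2 = 1)

theorem continuous_liftIco_kernel : Continuous (AddCircle.liftIco 2 (-1) (kernel θ)) :=
  AddCircle.liftIco_continuous (by norm_num [kernel_neg_one])
    (by unfold kernel; fun_prop : Continuous (kernel θ)).continuousOn

theorem fourierCoeff_liftIco_kernel {n : ℤ} (hθ : θ + n * π ≠ 0) :
    fourierCoeff (AddCircle.liftIco 2 (-1) (kernel θ)) n =
      ((-2 * (-1) ^ n * Real.sin θ ^ 3 / (θ + n * π) ^ 3 : ℝ) : ℂ) := by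
  set r : ℂ := ((θ + n * π : ℝ) : ℂ) with hr
  have hr0 : r ≠ 0 := Complex.ofReal_ne_zero.mpr hθ
  set w : ℂ := -(r * I) with hw
  have hw0 : w ≠ 0 := neg_ne_zero.mpr (mul_ne_zero hr0 Complex.I_ne_zero)
  have hintegrand (s : ℝ) : fourier (-n) ((s : ℝ) : AddCircle (-1 + 2 - -1 : ℝ)) • kernel θ s =
      ((Real.sin θ : ℂ) ^ 2 * s ^ 2 + (-2 * Real.sin θ * Real.cos θ * I) * s +
        ((Real.sin θ : ℂ) ^ 2 - 2)) * Complex.exp (w * s) := by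
    rw [fourier_coe_apply, smul_eq_mul, kernel, mul_left_comm, ← Complex.exp_add]
    congr 2
    · ring
    · rw [hw, hr]; push_cast; ring
  have hexp : Complex.exp w = (-1) ^ n * (Real.cos θ - Real.sin θ * I) := by
    rw [hw, hr, show -(((θ + n * π : ℝ) : ℂ) * I) = -(θ * I) + ((-n : ℤ) : ℂ) * π * I by
      push_cast; ring, Complex.exp_add_int_mul_pi_mul_I, Complex.exp_neg_ofReal_mul_I, zpow_neg,
      ← inv_zpow, inv_neg_one]
  have hexp_neg : Complex.exp (-w) = (-1) ^ n * (Real.cos θ + Real.sin θ * I) := by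
    rw [hw, neg_neg, hr, show ((θ + n * π : ℝ) : ℂ) * I = θ * I + n * π * I by push_cast; ring,
      Complex.exp_add_int_mul_pi_mul_I, Complex.exp_ofReal_mul_I]
  have hw_inv : w⁻¹ = I * r⁻¹ := by
    rw [hw]; field_simp; exact Complex.I_sq.symm
  rw [fourierCoeff_liftIco_eq, fourierCoeffOn_eq_integral]
  simp_rw [hintegrand]
  rw [show (-1 : ℝ) + 2 = 1 by norm_num, intervalIntegral.integral_eq_sub_of_hasDerivAt
    (fun s _ => hasDerivAt_quadratic_mul_cexp hw0 _ _ _ s)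
    ((by fun_prop : Continuous _).intervalIntegrable _ _)]
  simp only [Complex.ofReal_one, Complex.ofReal_neg, mul_one, mul_neg_one, hexp, hexp_neg,
    Complex.real_smul, Complex.ofReal_div, Complex.ofReal_mul, Complex.ofReal_pow,
    Complex.ofReal_zpow, Complex.ofReal_ofNat, Complex.ofReal_sub, ← hr]
  have hCS : (Real.sin θ : ℂ) ^ 2 + (Real.cos θ : ℂ) ^ 2 = 1 := by
    exact_mod_cast Real.sin_sq_add_cos_sq θ
  generalize (Real.sin θ : ℂ) = S at hCS ⊢
  generalize (Real.cos θ : ℂ) = C at hCS ⊢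
  simp only [div_eq_mul_inv, ← inv_pow, hw_inv]
  -- The boundary terms coming from `K` and `K'` cancel (this is where `hCS` and `I ^ 2 = -1`
  -- enter); only the one from the jump of `K''` survives.
  linear_combination (-2 * (-1) ^ n * I ^ 2 * S * r⁻¹) * hCS +
    (-2 * (-1) ^ n * S ^ 2 * C * I ^ 2 * r⁻¹ ^ 2 - 2 * (-1) ^ n * S ^ 3 * r⁻¹ ^ 3 * (I ^ 2 - 1)) *
      Complex.I_sq

theorem hasSum_neg_one_zpow_div_add_pow_three {x : ℝ} (hx : ∀ m : ℤ, x ≠ m) :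
    HasSum (fun n : ℤ => (-1 : ℝ) ^ n / (x + n) ^ 3)
      (π ^ 3 * (2 - Real.sin (π * x) ^ 2) / (2 * Real.sin (π * x) ^ 3)) := by
  set S := Real.sin (π * x)
  have hS : S ≠ 0 := Real.sin_pi_mul_ne_zero hx
  have hxn (n : ℤ) : x + n ≠ 0 := fun h => hx (-n) (by push_cast; linarith)
  let f : C(AddCircle (2 : ℝ), ℂ) := ⟨_, continuous_liftIco_kernel (π * x)⟩
  have hcoeff (n : ℤ) :
      fourierCoeff f n = ((-2 * (-1) ^ n * S ^ 3 / (π * x + n * π) ^ 3 : ℝ) : ℂ) :=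
    fourierCoeff_liftIco_kernel (π * x) <| by
      rw [show π * x + n * π = π * (x + n) by ring]; exact mul_ne_zero pi_ne_zero (hxn n)
  have hsummable : Summable (fourierCoeff f) := by
    refine .of_norm_bounded (((Real.summable_one_div_int_add_rpow x 3).mpr (by norm_num)).mul_left
      (2 * |S| ^ 3 / π ^ 3)) fun n => le_of_eq ?_
    rw [hcoeff, Complex.norm_real, Real.norm_eq_abs, show π * x + n * π = π * (n + x) by ring]
    simp only [abs_div, abs_mul, abs_pow, abs_neg, abs_neg_one_zpow, abs_two, abs_of_pos pi_pos,
      Real.rpow_ofNat]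
    have : |(n : ℝ) + x| ≠ 0 := by rw [add_comm]; exact abs_ne_zero.mpr (hxn n)
    field_simp
  have hf0 : f 0 = ((S ^ 2 - 2 : ℝ) : ℂ) := by
    rw [← AddCircle.coe_zero]
    change AddCircle.liftIco 2 (-1) (kernel (π * x)) ((0 : ℝ) : AddCircle (2 : ℝ)) = _
    rw [AddCircle.liftIco_coe_apply (by norm_num), kernel_zero]
    norm_cast
  have hsum := has_pointwise_sum_fourier_series_of_summable hsummable 0
  simp only [hcoeff, fourier_eval_zero, smul_eq_mul, mul_one, hf0, Complex.hasSum_ofReal] at hsum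
  have hterm (n : ℤ) : (-1 : ℝ) ^ n / (x + n) ^ 3 =
      -π ^ 3 / (2 * S ^ 3) * (-2 * (-1) ^ n * S ^ 3 / (π * x + n * π) ^ 3) := by
    rw [show π * x + n * π = π * (x + n) by ring]
    field_simp [hxn n]
  rw [funext hterm,
    show π ^ 3 * (2 - S ^ 2) / (2 * S ^ 3) = -π ^ 3 / (2 * S ^ 3) * (S ^ 2 - 2) by ring]
  exact hsum.mul_left _

end AlternatingInvCube

theorem pi_cube_eq (x : ℝ) (hx : ∀ m : ℤ, x ≠ m) :
    Tendsto (fun N : ℕ =>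
        2 * Real.sin (π * x) ^ 3 / (2 - Real.sin (π * x) ^ 2) *
          ∑ n ∈ Finset.Icc (-(N : ℤ)) (N : ℤ), (-1 : ℝ) ^ n / (x + n) ^ 3)
      atTop (nhds (π ^ 3)) := by
  have hS : Real.sin (π * x) ≠ 0 := Real.sin_pi_mul_ne_zero hx
  have h2S : 2 - Real.sin (π * x) ^ 2 ≠ 0 := by nlinarith [Real.sin_sq_le_one (π * x)]
  have hsymm := SummationFilter.hasSum_symmetricIcc_iff.mp
    ((AlternatingInvCube.hasSum_neg_one_zpow_div_add_pow_three hx).mono_left SummationFilter.le_atTop)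
  convert hsymm.const_mul (2 * Real.sin (π * x) ^ 3 / (2 - Real.sin (π * x) ^ 2)) using 2
  field_simp
end

section
/- For all real x and a, neither of which is an integer, π·cot(πx) − π·cot(πa) = ∑_{n=-∞}^{∞} (a − x)/((x − n)(a − n)), where the doubly infinite sum converges absolutely. -/
/-!
The summand is `1 / (x - n) - 1 / (a - n)`, which is `O(1 / n ^ 2)`, so the series converges
absolutely. Grouping the terms `n` and `-n` turns it into the difference of the Mittag-Leffler
expansions `π cot (π x) = 1 / x + ∑_{n ≥ 1} (1 / (x - n) + 1 / (x + n))` at `x` and at `a`.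
-/

open Real Filter Asymptotics

lemma isTheta_sub_intCast (x : ℝ) : (fun n : ℤ => x - n) =Θ[cofinite] fun n => (n : ℝ) := by
  have h : (fun n : ℤ => -(n : ℝ)) =Θ[cofinite] fun n => (n : ℝ) :=
    ⟨(isBigO_refl _ _).neg_left, (isBigO_refl _ _).neg_right⟩
  have h' := h.add_isLittleO (isLittleO_const_left.2 (.inr
    (tendsto_norm_comp_cofinite_atTop_of_isClosedEmbedding Int.isClosedEmbedding_coe_real)) :
      (fun _ : ℤ => x) =o[cofinite] fun n => (n : ℝ))
  simpa only [Pi.add_def, neg_add_eq_sub] using h'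

lemma summable_inv_sub_intCast_mul_sub_intCast (x a : ℝ) :
    Summable fun n : ℤ => ((x - n) * (a - n))⁻¹ := by
  apply EisensteinSeries.summable_inv_of_isBigO_rpow_inv one_lt_two
  simpa only [mul_inv, Real.rpow_two, sq, abs_mul_abs_self] using
    (isTheta_sub_intCast x).inv.isBigO.mul (isTheta_sub_intCast a).inv.isBigO

lemma hasSum_pi_mul_cot_sub_one_div {x : ℝ} (hx : ∀ m : ℤ, x ≠ m) :
    HasSum (fun n : ℕ => 1 / (x - (n + 1)) + 1 / (x + (n + 1))) (π * cot (π * x) - 1 / x) := by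
  have hz : (x : ℂ) ∈ Complex.integerComplement := by
    rintro ⟨m, hm⟩
    exact hx m (by exact_mod_cast hm.symm)
  rw [← Complex.hasSum_ofReal]
  push_cast [Complex.ofReal_cot]
  rw [cot_series_rep' hz]
  exact (summable_cotTerm hz).hasSum

theorem cot_diff_sum (x a : ℝ) (hx : ∀ m : ℤ, x ≠ m) (ha : ∀ m : ℤ, a ≠ m) :
    Summable (fun n : ℤ => (a - x) / ((x - n) * (a - n))) ∧
      π * Real.cot (π * x) - π * Real.cot (π * a) =
        ∑' n : ℤ, (a - x) / ((x - n) * (a - n)) := by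
  set f : ℤ → ℝ := fun n => (a - x) / ((x - n) * (a - n))
  have hf : Summable f :=
    ((summable_inv_sub_intCast_mul_sub_intCast x a).mul_left (a - x)).congr fun n =>
      (div_eq_mul_inv _ _).symm
  have hf_eq (n : ℤ) : f n = 1 / (x - n) - 1 / (a - n) := by
    rw [one_div, one_div, inv_sub_inv (sub_ne_zero.2 (hx n)) (sub_ne_zero.2 (ha n))]
    ring
  have hsym : HasSum (fun n : ℕ => f (n + 1) + f (-(n + 1)))
      ((π * cot (π * x) - 1 / x) - (π * cot (π * a) - 1 / a)) :=
    ((hasSum_pi_mul_cot_sub_one_div hx).sub (hasSum_pi_mul_cot_sub_one_div ha)).congr_fun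
      fun n => by simp only [hf_eq]; push_cast; ring
  have hpos : Summable fun n : ℕ => f (n + 1) :=
    hf.comp_injective fun m n h => by simpa using h
  have hneg : Summable fun n : ℕ => f (-(n + 1)) :=
    hf.comp_injective fun m n h => by simpa using h
  refine ⟨hf, ?_⟩
  rw [tsum_of_add_one_of_neg_add_one hpos hneg, add_right_comm, ← hpos.tsum_add hneg,
    hsym.tsum_eq, hf_eq 0]
  simp only [Int.cast_zero, sub_zero]
  ring
end

section
/- π = 2 · ∑_{n=-∞}^{∞} 1/((2n−1)(4n−1)), where the sum over all integers n converges absolutely. -/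
open Real Filter Finset Topology

/-!
Substitute `n ↦ -n` and group the term at `-m` with the one at `m + 1`: for `m : ℕ` they add
up to `4 / ((4m+1)(4m+3)) = 2 (1/(4m+1) - 1/(4m+3))`, twice a pair of consecutive terms of Leibniz's
series `∑ (-1)^i / (2i+1) = π/4`. Hence the sum is `π/2`. Absolute convergence comes from
`0 < (2n-1)^2 ≤ (2n-1)(4n-1)` for every integer `n`.
-/

theorem Finset.sum_range_two_mul {M : Type*} [AddCommMonoid M] (g : ℕ → M) (k : ℕ) :
    ∑ i ∈ range (2 * k), g i = ∑ m ∈ range k, (g (2 * m) + g (2 * m + 1)) := by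
  induction k with
  | zero => simp
  | succ k ih => rw [Nat.mul_succ, sum_range_succ, sum_range_succ, sum_range_succ, ih, add_assoc]

theorem hasSum_pairs_of_tendsto_sum_range {g : ℕ → ℝ} {a : ℝ}
    (hg : Tendsto (fun k => ∑ i ∈ range k, g i) atTop (𝓝 a))
    (hpairs : ∀ m, 0 ≤ g (2 * m) + g (2 * m + 1)) :
    HasSum (fun m => g (2 * m) + g (2 * m + 1)) a := by
  rw [hasSum_iff_tendsto_nat_of_nonneg hpairs]
  exact (hg.comp (tendsto_id.const_mul_atTop' two_pos)).congr (sum_range_two_mul g)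

theorem hasSum_leibniz_pairs :
    HasSum (fun m : ℕ => (1 / (4 * m + 1) - 1 / (4 * m + 3) : ℝ)) (π / 4) := by
  have hpair (m : ℕ) : (-1 : ℝ) ^ (2 * m) / (2 * (2 * m : ℕ) + 1) +
      (-1) ^ (2 * m + 1) / (2 * (2 * m + 1 : ℕ) + 1) = 1 / (4 * m + 1) - 1 / (4 * m + 3) := by
    simp only [pow_succ, pow_mul]
    push_cast
    ring
  refine (hasSum_pairs_of_tendsto_sum_range tendsto_sum_pi_div_four fun m => ?_).congr_fun
    fun m => (hpair m).symm
  rw [hpair, sub_nonneg]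
  gcongr
  norm_num

theorem two_mul_sub_one_ne_zero (n : ℤ) : 2 * (n : ℝ) - 1 ≠ 0 := by
  have : 2 * n - 1 ≠ 0 := by omega
  exact_mod_cast this

theorem two_mul_sub_one_sq_le (n : ℤ) :
    (2 * (n : ℝ) - 1) ^ 2 ≤ (2 * n - 1) * (4 * n - 1) := by
  have h : 0 ≤ 2 * n * (2 * n - 1) := by rcases le_or_gt n 0 with hn | hn <;> nlinarith
  have : (2 * n - 1) ^ 2 ≤ (2 * n - 1) * (4 * n - 1) := by nlinarith
  exact_mod_cast this

theorem summable_one_div_two_mul_sub_one_sq :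
    Summable (fun n : ℤ => 1 / (2 * (n : ℝ) - 1) ^ 2) := by
  have h := (summable_one_div_int_pow.2 one_lt_two).comp_injective
    (i := fun n : ℤ => 2 * n - 1) fun a b hab => by simpa using hab
  simpa [Function.comp_def] using h

theorem summable_one_div_two_mul_sub_one_mul_four_mul_sub_one :
    Summable (fun n : ℤ => (1 : ℝ) / ((2 * n - 1) * (4 * n - 1))) := by
  have hsq (n : ℤ) : 0 < (2 * (n : ℝ) - 1) ^ 2 := sq_pos_of_ne_zero (two_mul_sub_one_ne_zero n)
  refine summable_one_div_two_mul_sub_one_sq.of_nonneg_of_le (fun n => ?_) fun n => ?_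
  · exact one_div_nonneg.2 ((hsq n).le.trans (two_mul_sub_one_sq_le n))
  · exact one_div_le_one_div_of_le (hsq n) (two_mul_sub_one_sq_le n)

theorem one_div_mul_neg_add_one_div_mul_add_one {x : ℝ} (hx : 0 ≤ x) :
    1 / ((2 * -x - 1) * (4 * -x - 1)) + 1 / ((2 * (x + 1) - 1) * (4 * (x + 1) - 1)) =
      2 * (1 / (4 * x + 1) - 1 / (4 * x + 3)) := by
  have h1 : 2 * x + 1 ≠ 0 := by positivity
  have h2 : 4 * x + 1 ≠ 0 := by positivity
  have h3 : 4 * x + 3 ≠ 0 := by positivity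
  rw [show (2 * -x - 1) * (4 * -x - 1) = (2 * x + 1) * (4 * x + 1) by ring,
    show (2 * (x + 1) - 1) * (4 * (x + 1) - 1) = (2 * x + 1) * (4 * x + 3) by ring]
  field_simp
  ring

theorem pi_eq_two_mul_sum_general :
    Summable (fun n : ℤ => (1 : ℝ) / ((2 * n - 1) * (4 * n - 1))) ∧
      π = 2 * ∑' n : ℤ, (1 : ℝ) / ((2 * n - 1) * (4 * n - 1)) := by
  set f : ℤ → ℝ := fun n => 1 / ((2 * n - 1) * (4 * n - 1))
  have hs : Summable f := summable_one_div_two_mul_sub_one_mul_four_mul_sub_one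
  refine ⟨hs, ?_⟩
  have hpairs : HasSum (fun m : ℕ => f (-m) + f (m + 1)) (∑' n, f n) := by
    simpa using ((Equiv.neg ℤ).hasSum_iff.2 hs.hasSum).nat_add_neg_add_one
  have hleibniz : HasSum (fun m : ℕ => f (-m) + f (m + 1)) (2 * (π / 4)) := by
    refine (hasSum_leibniz_pairs.mul_left 2).congr_fun fun m => ?_
    simpa [f] using one_div_mul_neg_add_one_div_mul_add_one (Nat.cast_nonneg m)
  linarith [hpairs.unique hleibniz]

theorem pi_eq_two_mul_sum (_ : True) :
    Summable (fun n : ℤ => (1 : ℝ) / ((2 * n - 1) * (4 * n - 1))) ∧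
      π = 2 * ∑' n : ℤ, (1 : ℝ) / ((2 * n - 1) * (4 * n - 1)) :=
  pi_eq_two_mul_sum_general
end

section
/- For all real x with 0 < |x| < 1, x·g(x) = −(x+1)·g(x+1), where g(x) = ∏_{n=1}^{∞} (1 − x²/n²). -/
/-! By Euler's product formula, `π x g(x) = sin (π x)`; the functional equation is then
`sin (π (x + 1)) = -sin (π x)`. -/

open Real Filter

theorem Real.pi_mul_mul_eq_sin_of_tendsto_euler_prod {x g : ℝ}
    (hg : Tendsto (fun N : ℕ => ∏ n ∈ Finset.range N, (1 - x ^ 2 / ((n : ℝ) + 1) ^ 2))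
      atTop (nhds g)) :
    π * x * g = sin (π * x) :=
  tendsto_nhds_unique ((hg.const_mul (π * x)).congr fun _ => by ring)
    (tendsto_euler_sin_prod x)

theorem functional_equation_g_general (x gx gx1 : ℝ)
    (hg : Tendsto (fun N : ℕ => ∏ n ∈ Finset.range N, (1 - x ^ 2 / ((n : ℝ) + 1) ^ 2))
      atTop (nhds gx))
    (hg1 : Tendsto (fun N : ℕ => ∏ n ∈ Finset.range N, (1 - (x + 1) ^ 2 / ((n : ℝ) + 1) ^ 2))
      atTop (nhds gx1)) :
    x * gx = -(x + 1) * gx1 := by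
  have hsin : sin (π * (x + 1)) = -sin (π * x) := by rw [mul_add, mul_one, sin_add_pi]
  have key : π * (x * gx) = π * (-(x + 1) * gx1) := by
    linear_combination pi_mul_mul_eq_sin_of_tendsto_euler_prod hg +
      pi_mul_mul_eq_sin_of_tendsto_euler_prod hg1 + hsin
  exact mul_left_cancel₀ pi_ne_zero key

theorem functional_equation_g (x gx gx1 : ℝ) (h0 : 0 < |x|) (h1 : |x| < 1)
    (hg : Tendsto (fun N : ℕ => ∏ n ∈ Finset.range N, (1 - x ^ 2 / ((n : ℝ) + 1) ^ 2))
      atTop (nhds gx))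
    (hg1 : Tendsto (fun N : ℕ => ∏ n ∈ Finset.range N, (1 - (x + 1) ^ 2 / ((n : ℝ) + 1) ^ 2))
      atTop (nhds gx1)) :
    x * gx = -(x + 1) * gx1 :=
  functional_equation_g_general x gx gx1 hg hg1
end
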